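/- arXiv:1602.05478 — 4 statements merged into one kernel-verified Lean document; each statement's English description precedes it below -/
import Mathlib

section
/- Let Q be a lower transition rate operator on a finite nonempty set 𝒳, and let (T_t)_{t≥0} be the associated family of operators determined by the differential equation d/dt T_t f = Q(T_t f) with T_0 f = f. Then for any t > 0, Q is ergodic if and only if the lower transition operator T_t is 1-step absorbing. -/
open Filter Topology

/-- The minimum of a real-valued function on a finite nonempty type. -/
noncomputable def minf {X : Type*} [Fintype X] [Nonempty X] (f : X → ℝ) : ℝ :=
  Finset.univ.inf' Finset.univ_nonempty f

/-- The maximum of a real-valued function on a finite nonempty type. -/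
noncomputable def maxf {X : Type*} [Fintype X] [Nonempty X] (f : X → ℝ) : ℝ :=
  Finset.univ.sup' Finset.univ_nonempty f

/-- The (real-valued) indicator function of a set. -/
noncomputable def ind {X : Type*} (A : Set X) : X → ℝ := A.indicator 1

/-- The conjugate (upper) operator `f ↦ -(Q (-f))`. -/
def conjOp {X : Type*} (Q : (X → ℝ) → (X → ℝ)) : (X → ℝ) → (X → ℝ) :=
  fun f => -(Q (-f))

/-- A lower transition rate operator. -/
def IsLTRO {X : Type*} [Fintype X] (Q : (X → ℝ) → (X → ℝ)) : Prop :=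
  (∀ μ : ℝ, Q (fun _ => μ) = 0) ∧
  (∀ f g : X → ℝ, Q f + Q g ≤ Q (f + g)) ∧
  (∀ l : ℝ, 0 ≤ l → ∀ f : X → ℝ, Q (l • f) = l • Q f) ∧
  (∀ x y : X, x ≠ y → 0 ≤ Q (ind {y}) x)

/-- A lower transition operator. -/
def IsLTO {X : Type*} [Fintype X] [Nonempty X] (T : (X → ℝ) → (X → ℝ)) : Prop :=
  (∀ f : X → ℝ, ∀ x : X, minf f ≤ T f x) ∧
  (∀ f g : X → ℝ, T f + T g ≤ T (f + g)) ∧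
  (∀ l : ℝ, 0 ≤ l → ∀ f : X → ℝ, T (l • f) = l • T f)

/-- `T` is the family of operators solving `d/dt T_t f = Q (T_t f)` on `[0,∞)`
with `T_0 f = f`. -/
def IsSol {X : Type*} [Fintype X] (Q : (X → ℝ) → (X → ℝ))
    (T : ℝ → (X → ℝ) → (X → ℝ)) : Prop :=
  (∀ f : X → ℝ, T 0 f = f) ∧
  (∀ f : X → ℝ, ∀ t : ℝ, 0 ≤ t →
    HasDerivWithinAt (fun s => T s f) (Q (T t f)) (Set.Ici 0) t)

/-- Ergodicity of a lower transition rate operator, expressed via its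
associated time-dependent family `T`. -/
def ErgodicQ {X : Type*} [Fintype X] (T : ℝ → (X → ℝ) → (X → ℝ)) : Prop :=
  ∀ f : X → ℝ, ∃ c : ℝ, Tendsto (fun t => T t f) atTop (𝓝 (fun _ : X => c))

/-- Ergodicity of a lower transition operator. -/
def ErgodicT {X : Type*} [Fintype X] (T : (X → ℝ) → (X → ℝ)) : Prop :=
  ∀ f : X → ℝ, ∃ c : ℝ, Tendsto (fun n : ℕ => T^[n] f) atTop (𝓝 (fun _ : X => c))

/-- `x` is upper reachable from `y` (w.r.t. the lower transition rate operator `Q`). -/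
def upperReach {X : Type*} [Fintype X] (Q : (X → ℝ) → (X → ℝ)) (y x : X) : Prop :=
  ∃ (n : ℕ) (p : ℕ → X), p 0 = y ∧ p n = x ∧
    ∀ k : ℕ, k < n → p (k + 1) ≠ p k ∧ 0 < conjOp Q (ind {p (k + 1)}) (p k)

/-- One step of the lower-reachability construction: `A ↦ A ∪ {y ∉ A : Q(𝟙_A)(y) > 0}`. -/
def lowerStep {X : Type*} [Fintype X] (Q : (X → ℝ) → (X → ℝ)) (A : Set X) : Set X :=
  A ∪ {y : X | y ∉ A ∧ 0 < Q (ind A) y}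

/-- `A` is lower reachable from `x`: `x ∈ Aₙ` where `n` is the first index with
`Aₙ = Aₙ₊₁` (equivalently, any such index, since the sequence is determined by
recursion and increasing). -/
def lowerReach {X : Type*} [Fintype X] (Q : (X → ℝ) → (X → ℝ)) (x : X) (A : Set X) : Prop :=
  ∃ n : ℕ, (lowerStep Q)^[n] A = (lowerStep Q)^[n + 1] A ∧ x ∈ (lowerStep Q)^[n] A

/-- The set `𝒳_RA := {x : ∃ n ≥ 1, min T̄ⁿ 𝟙ₓ > 0}`. -/
noncomputable def XRA {X : Type*} [Fintype X] [Nonempty X]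
    (T : (X → ℝ) → (X → ℝ)) : Set X :=
  {x : X | ∃ n : ℕ, 0 < minf ((conjOp T)^[n + 1] (ind {x}))}

/-- A regularly absorbing lower transition operator. -/
def RegAbs {X : Type*} [Fintype X] [Nonempty X] (T : (X → ℝ) → (X → ℝ)) : Prop :=
  (XRA T).Nonempty ∧ ∀ x : X, x ∉ XRA T → ∃ n : ℕ, 0 < T^[n + 1] (ind (XRA T)) x

/-- The set `𝒳_1A := {x : min T̄ 𝟙ₓ > 0}`. -/
noncomputable def X1A {X : Type*} [Fintype X] [Nonempty X]
    (T : (X → ℝ) → (X → ℝ)) : Set X :=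
  {x : X | 0 < minf (conjOp T (ind {x}))}

/-- A 1-step absorbing lower transition operator. -/
def OneStepAbs {X : Type*} [Fintype X] [Nonempty X] (T : (X → ℝ) → (X → ℝ)) : Prop :=
  (X1A T).Nonempty ∧ ∀ x : X, x ∉ X1A T → 0 < T (ind (X1A T)) x

/-- The operator (sup) norm of a non-negatively homogeneous operator. -/
noncomputable def opN {X : Type*} [Fintype X] (Q : (X → ℝ) → (X → ℝ)) : ℝ :=
  sSup {r : ℝ | ∃ f : X → ℝ, ‖f‖ = 1 ∧ r = ‖Q f‖}

/-!
Both `Q` and its conjugate `Q̄ f = -Q (-f)` satisfy the positive maximum principle, and `T_s` and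
`T̄_s` are the flows they generate. A maximum principle for the flow gives a comparison
principle, hence monotonicity, homogeneity and the semigroup law, and it shows that the set of
states where `T_s g` (or `T̄_s g`) is positive, for `g ≥ 0`, is the same for every `s > 0`.
So `𝒳_1A` of `T_s` does not depend on `s > 0`, and it is closed under upper reachability.

If `Q` is ergodic, the limits of `T̄_s 𝟙_x` are constants adding up to at least one, so some
state lies in `𝒳_1A`; from `𝒳_1A` the lower probability of staying there is one, so by
ergodicity `T_s 𝟙_{𝒳_1A}` becomes positive everywhere, and by time independence it is already
positive at time `t`. Conversely, if `T_t` is 1-step absorbing, `T_t 𝟙_{𝒳_1A}` is positive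
everywhere, so `T_t` contracts `max f - min f` by a fixed factor, while `min T_s f` increases and
`max T_s f` decreases in `s`.
-/

section MinMax

variable {X : Type*} [Fintype X] [Nonempty X]

theorem minf_le (f : X → ℝ) (x : X) : minf f ≤ f x := Finset.inf'_le _ (Finset.mem_univ x)

theorem le_maxf (f : X → ℝ) (x : X) : f x ≤ maxf f := Finset.le_sup' _ (Finset.mem_univ x)

theorem le_minf {f : X → ℝ} {c : ℝ} (h : ∀ x, c ≤ f x) : c ≤ minf f :=
  Finset.le_inf' _ _ fun x _ => h x

theorem maxf_le {f : X → ℝ} {c : ℝ} (h : ∀ x, f x ≤ c) : maxf f ≤ c :=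
  Finset.sup'_le _ _ fun x _ => h x

theorem lt_minf_iff {f : X → ℝ} {c : ℝ} : c < minf f ↔ ∀ x, c < f x := by
  simp [minf, Finset.lt_inf'_iff]

theorem exists_minf_eq (f : X → ℝ) : ∃ x, minf f = f x := by
  obtain ⟨x, -, hx⟩ := Finset.exists_mem_eq_inf' Finset.univ_nonempty f
  exact ⟨x, hx⟩

theorem exists_maxf_eq (f : X → ℝ) : ∃ x, maxf f = f x := by
  obtain ⟨x, -, hx⟩ := Finset.exists_mem_eq_sup' Finset.univ_nonempty f
  exact ⟨x, hx⟩

theorem minf_le_maxf (f : X → ℝ) : minf f ≤ maxf f :=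
  (minf_le f (Classical.arbitrary X)).trans (le_maxf f _)

end MinMax

section Indicator

variable {X : Type*}

theorem ind_apply (A : Set X) (x : X) [Decidable (x ∈ A)] :
    ind A x = if x ∈ A then 1 else 0 := by
  simp [ind, Set.indicator_apply]

theorem ind_nonneg (A : Set X) : 0 ≤ ind A := fun x => by
  classical
  rw [ind_apply]; split_ifs <;> norm_num

theorem ind_le_one (A : Set X) : ind A ≤ 1 := fun x => by
  classical
  rw [ind_apply]; split_ifs <;> norm_num

theorem ind_singleton [DecidableEq X] (x : X) : ind {x} = Pi.single x 1 := by
  ext y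
  simp [ind_apply, Pi.single_apply]

theorem sum_smul_ind_singleton [Fintype X] (h : X → ℝ) : ∑ z, h z • ind {z} = h := by
  classical
  simp_rw [ind_singleton, ← Pi.single_smul, smul_eq_mul, mul_one]
  exact Finset.univ_sum_single h

theorem ind_of_mem {A : Set X} {x : X} (h : x ∈ A) : ind A x = 1 := by
  classical
  simp [ind_apply, h]

theorem ind_of_notMem {A : Set X} {x : X} (h : x ∉ A) : ind A x = 0 := by
  classical
  simp [ind_apply, h]

theorem smul_ind_singleton_le {w : X → ℝ} (hw : 0 ≤ w) (x : X) : w x • ind {x} ≤ w := by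
  intro y
  by_cases hy : y = x
  · subst hy; simp [ind_of_mem (Set.mem_singleton y)]
  · simpa [ind_of_notMem (show y ∉ ({x} : Set X) from hy)] using hw y

theorem exists_pos_forall_le [Fintype X] [Nonempty X] {P : Set X} {w : X → ℝ}
    (hP : ∀ x ∈ P, 0 < w x) : ∃ ε : ℝ, 0 < ε ∧ ∀ x ∈ P, ε ≤ w x := by
  classical
  refine ⟨minf fun x => if x ∈ P then w x else 1, lt_minf_iff.2 fun x => ?_, fun x hx => ?_⟩
  · split_ifs with hx
    exacts [hP x hx, one_pos]
  · simpa [hx] using minf_le (fun x => if x ∈ P then w x else 1) x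

theorem exists_pos_smul_ind_le [Fintype X] [Nonempty X] {P : Set X} {w : X → ℝ} (hw : 0 ≤ w)
    (hP : ∀ x ∈ P, 0 < w x) : ∃ ε : ℝ, 0 < ε ∧ ε • ind P ≤ w := by
  obtain ⟨ε, hε, hεw⟩ := exists_pos_forall_le hP
  refine ⟨ε, hε, fun x => ?_⟩
  by_cases hx : x ∈ P
  · simpa [ind_of_mem hx] using hεw x hx
  · simpa [ind_of_notMem hx] using hw x

end Indicator

section MaximumPrinciple

open Set

variable {X : Type*} [Fintype X] [Nonempty X]

theorem eventually_lt_add_mul_of_hasDerivWithinAt {g : ℝ → ℝ} {g' r ρ : ℝ}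
    (hg : HasDerivWithinAt g g' (Ici r) r) (hρ : g' < ρ) :
    ∀ᶠ z in 𝓝[>] r, g z < g r + ρ * (z - r) := by
  filter_upwards [hg.Ioi_of_Ici.limsup_slope_le' (lt_irrefl r) hρ, self_mem_nhdsWithin]
    with z hz hzr
  rw [slope_def_field, div_lt_iff₀ (sub_pos.2 hzr)] at hz
  linarith

theorem maxf_le_maxf_zero_of_deriv_nonpos_at_max {w w' : ℝ → X → ℝ}
    (hw : ∀ s, 0 ≤ s → HasDerivWithinAt w (w' s) (Ici 0) s)
    (hmax : ∀ s, 0 ≤ s → ∀ x, w s x = maxf (w s) → w' s x ≤ 0) {s : ℝ} (hs : 0 ≤ s) :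
    maxf (w s) ≤ maxf (w 0) := by
  have hcoord : ∀ r, 0 ≤ r → ∀ x, HasDerivWithinAt (fun z => w z x) (w' r x) (Ici r) r :=
    fun r hr x => (hasDerivWithinAt_pi.1 ((hw r hr).mono (Ici_subset_Ici.2 hr))) x
  refine image_le_of_liminf_slope_right_le_deriv_boundary (f := fun r => maxf (w r))
    (B := fun _ => maxf (w 0))
    (B' := 0) ?_ le_rfl continuousOn_const (fun _ _ => hasDerivWithinAt_const _ _ _) ?_
    ⟨hs, le_rfl⟩
  · exact ContinuousOn.finset_sup'_apply _ fun x _ r hr =>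
      ((hasDerivWithinAt_pi.1 (hw r hr.1) x).continuousWithinAt).mono fun z hz => hz.1
  · intro r hr ρ hρ
    have hlt : ∀ x, ∀ᶠ z in 𝓝[>] r, w z x < maxf (w r) + ρ * (z - r) := by
      intro x
      rcases (le_maxf (w r) x).eq_or_lt with hx | hx
      · rw [← hx]
        exact eventually_lt_add_mul_of_hasDerivWithinAt (hcoord r hr.1 x)
          ((hmax r hr.1 x hx).trans_lt hρ)
      · have hcont : Tendsto (fun z => w z x) (𝓝[>] r) (𝓝 (w r x)) :=
          ((hcoord r hr.1 x).continuousWithinAt).mono_left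
            (nhdsWithin_mono _ Ioi_subset_Ici_self)
        filter_upwards [hcont (Iio_mem_nhds hx), self_mem_nhdsWithin] with z (hz : w z x < _) hzr
        nlinarith [mem_Ioi.1 hzr, show (0 : ℝ) < ρ from hρ]
    refine Eventually.frequently ?_
    filter_upwards [Filter.eventually_all.2 hlt, self_mem_nhdsWithin] with z hz hzr
    obtain ⟨x, hx⟩ := exists_maxf_eq (w z)
    rw [slope_def_field, div_lt_iff₀ (sub_pos.2 hzr)]
    linarith [hz x]

end MaximumPrinciple

/-- The properties of a rate operator that make its flow monotone; the last one is the positive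
maximum principle. A lower transition rate operator and its conjugate both have them, so the
flows `T` and `fun s => conjOp (T s)` can be treated at once. -/
structure IsMonotoneGenerator {X : Type*} (R : (X → ℝ) → (X → ℝ)) : Prop where
  map_add_const : ∀ f c, R (f + fun _ => c) = R f
  map_smul : ∀ l : ℝ, 0 ≤ l → ∀ f, R (l • f) = l • R f
  le_of_le_of_eq : ∀ f g x, f ≤ g → f x = g x → R f x ≤ R g x

namespace IsMonotoneGenerator

open Set

variable {X : Type*} {R : (X → ℝ) → (X → ℝ)}

theorem map_zero (hR : IsMonotoneGenerator R) : R 0 = 0 := by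
  simpa using hR.map_smul 0 le_rfl 0

theorem map_const (hR : IsMonotoneGenerator R) (c : ℝ) : R (fun _ => c) = 0 := by
  simpa [hR.map_zero] using hR.map_add_const 0 c

theorem conjOp (hR : IsMonotoneGenerator R) : IsMonotoneGenerator (conjOp R) where
  map_add_const f c := by
    simp only [_root_.conjOp]
    rw [show -(f + fun _ => c) = -f + fun _ => -c by ext; simp; ring, hR.map_add_const]
  map_smul l hl f := by
    simp only [_root_.conjOp]
    rw [← smul_neg, hR.map_smul l hl, smul_neg]
  le_of_le_of_eq f g x hfg hx := by
    simp only [_root_.conjOp, Pi.neg_apply, neg_le_neg_iff]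
    exact hR.le_of_le_of_eq (-g) (-f) x (neg_le_neg hfg) (by simp [hx])

variable [Fintype X] [Nonempty X]

theorem comparison (hR : IsMonotoneGenerator R) {u v u' v' : ℝ → X → ℝ}
    (hu : ∀ s, 0 ≤ s → HasDerivWithinAt u (u' s) (Ici 0) s)
    (hv : ∀ s, 0 ≤ s → HasDerivWithinAt v (v' s) (Ici 0) s)
    (hsub : ∀ s, 0 ≤ s → u' s ≤ R (u s)) (hsuper : ∀ s, 0 ≤ s → R (v s) ≤ v' s)
    (h0 : u 0 ≤ v 0) {s : ℝ} (hs : 0 ≤ s) : u s ≤ v s := by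
  have hmax : ∀ r, 0 ≤ r → ∀ x, (u - v) r x = maxf ((u - v) r) → (u' - v') r x ≤ 0 := by
    intro r hr x hx
    have hle : u r ≤ v r + fun _ => maxf ((u - v) r) := fun y => by
      have := le_maxf ((u - v) r) y
      simp only [Pi.sub_apply, Pi.add_apply] at this ⊢
      linarith
    have hRx := hR.le_of_le_of_eq _ _ x hle (by simp only [Pi.sub_apply] at hx ⊢; simp [← hx])
    rw [hR.map_add_const] at hRx
    simp only [Pi.sub_apply]
    linarith [hsub r hr x, hsuper r hr x]
  have h := maxf_le_maxf_zero_of_deriv_nonpos_at_max (fun r hr => (hu r hr).sub (hv r hr)) hmax hs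
  have h0' : maxf ((u - v) 0) ≤ 0 := maxf_le fun x => by simpa using h0 x
  intro x
  have := (le_maxf ((u - v) s) x).trans (h.trans h0')
  simpa using this

end IsMonotoneGenerator

theorem mem_X1A_iff {X : Type*} [Fintype X] [Nonempty X] {U : (X → ℝ) → (X → ℝ)} {x : X} :
    x ∈ X1A U ↔ ∀ y, 0 < conjOp U (ind {x}) y :=
  lt_minf_iff

def posSet {X : Type*} (S : ℝ → (X → ℝ) → (X → ℝ)) (g : X → ℝ) : Set X :=
  {y | ∀ s, 0 < s → 0 < S s g y}

namespace IsSol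

open Set

variable {X : Type*} {R : (X → ℝ) → (X → ℝ)} {S : ℝ → (X → ℝ) → (X → ℝ)}

theorem conjOp [Fintype X] (hS : IsSol R S) : IsSol (conjOp R) (fun s => conjOp (S s)) := by
  refine ⟨fun f => by simp [_root_.conjOp, hS.1], fun f s hs => ?_⟩
  have h := (hS.2 (-f) s hs).neg
  simp only [_root_.conjOp, neg_neg]
  exact h

theorem eventually_map_pos [Fintype X] (hS : IsSol R S) {h : X → ℝ} {y : X} (hy : 0 ≤ h y)
    (hRy : 0 < R h y) :
    ∀ᶠ r in 𝓝[>] 0, 0 < S r h y := by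
  have hd : HasDerivWithinAt (fun r => S r h y) (R h y) (Ici 0) 0 := by
    simpa [hS.1] using hasDerivWithinAt_pi.1 (hS.2 h 0 le_rfl) y
  filter_upwards [(hasDerivWithinAt_iff_tendsto_slope' (lt_irrefl 0)).1 hd.Ioi_of_Ici
    (Ioi_mem_nhds hRy), self_mem_nhdsWithin] with r hr (hr0 : 0 < r)
  rw [mem_preimage, mem_Ioi, slope_def_field, hS.1, sub_zero] at hr
  linarith [(div_pos_iff_of_pos_right hr0).1 hr]

variable [Fintype X] [Nonempty X] (hS : IsSol R S) (hR : IsMonotoneGenerator R)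
include hS hR

theorem eq_of_hasDerivWithinAt {f : X → ℝ} {u : ℝ → X → ℝ} (h0 : u 0 = f)
    (hu : ∀ s, 0 ≤ s → HasDerivWithinAt u (R (u s)) (Ici 0) s) {s : ℝ} (hs : 0 ≤ s) :
    u s = S s f := by
  have hf : S 0 f = u 0 := by rw [hS.1, h0]
  exact le_antisymm
    (hR.comparison hu (hS.2 f) (fun _ _ => le_rfl) (fun _ _ => le_rfl) hf.ge hs)
    (hR.comparison (hS.2 f) hu (fun _ _ => le_rfl) (fun _ _ => le_rfl) hf.le hs)

theorem mono {f g : X → ℝ} (hfg : f ≤ g) {s : ℝ} (hs : 0 ≤ s) : S s f ≤ S s g :=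
  hR.comparison (hS.2 f) (hS.2 g) (fun _ _ => le_rfl) (fun _ _ => le_rfl)
    (by rwa [hS.1, hS.1]) hs

theorem map_const (c : ℝ) {s : ℝ} (hs : 0 ≤ s) : S s (fun _ => c) = fun _ => c :=
  (hS.eq_of_hasDerivWithinAt hR (u := fun _ _ => c) rfl
    (fun _ _ => by simpa [hR.map_const] using hasDerivWithinAt_const _ _ _) hs).symm

theorem map_add_const (f : X → ℝ) (c : ℝ) {s : ℝ} (hs : 0 ≤ s) :
    S s (f + fun _ => c) = S s f + fun _ => c :=
  (hS.eq_of_hasDerivWithinAt hR (u := fun r => S r f + fun _ => c) (by rw [hS.1])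
    (fun r hr => by rw [hR.map_add_const]; exact (hS.2 f r hr).add_const _) hs).symm

theorem map_smul {l : ℝ} (hl : 0 ≤ l) (f : X → ℝ) {s : ℝ} (hs : 0 ≤ s) :
    S s (l • f) = l • S s f :=
  (hS.eq_of_hasDerivWithinAt hR (u := fun r => l • S r f) (by rw [hS.1])
    (fun r hr => by rw [hR.map_smul l hl]; exact (hS.2 f r hr).const_smul l) hs).symm

theorem map_add {a s : ℝ} (ha : 0 ≤ a) (hs : 0 ≤ s) (f : X → ℝ) :
    S (a + s) f = S s (S a f) := by
  refine hS.eq_of_hasDerivWithinAt hR (u := fun r => S (a + r) f) (by simp) (fun r hr => ?_) hs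
  have h := (hS.2 f (a + r) (by positivity)).scomp r ((hasDerivWithinAt_id r (Ici 0)).const_add a)
    (fun z (hz : 0 ≤ z) => show 0 ≤ a + z by positivity)
  simpa [Function.comp_def] using h

theorem iterate {t : ℝ} (ht : 0 ≤ t) (n : ℕ) (f : X → ℝ) : (S t)^[n] f = S (n * t) f := by
  induction n with
  | zero => simp [hS.1]
  | succ n ih =>
    rw [Function.iterate_succ_apply', ih, ← hS.map_add hR (by positivity) ht]
    push_cast
    ring_nf

theorem minf_le (f : X → ℝ) {s : ℝ} (hs : 0 ≤ s) (x : X) : minf f ≤ S s f x := by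
  simpa [hS.map_const hR _ hs] using hS.mono hR (fun y => _root_.minf_le f y) hs x

theorem le_maxf (f : X → ℝ) {s : ℝ} (hs : 0 ≤ s) (x : X) : S s f x ≤ maxf f := by
  simpa [hS.map_const hR _ hs] using hS.mono hR (fun y => _root_.le_maxf f y) hs x

theorem map_nonneg {h : X → ℝ} (hh : 0 ≤ h) {s : ℝ} (hs : 0 ≤ s) : 0 ≤ S s h := by
  have h0 : S s 0 = 0 := hS.map_const hR 0 hs
  simpa [h0] using hS.mono hR hh hs

theorem map_le_of_nonpos {h : X → ℝ} (hRh : R h ≤ 0) {s : ℝ} (hs : 0 ≤ s) : S s h ≤ h :=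
  hR.comparison (hS.2 h) (fun _ _ => hasDerivWithinAt_const _ _ h) (fun _ _ => le_rfl)
    (fun _ _ => hRh) (by rw [hS.1]) hs

theorem map_ind_singleton_self_pos (y : X) {s : ℝ} (hs : 0 ≤ s) : 0 < S s (ind {y}) y := by
  set C := |R (ind {y}) y|
  have hderiv : ∀ r, HasDerivWithinAt (fun r => Real.exp (-C * r) • ind {y})
      ((-C * Real.exp (-C * r)) • ind {y}) (Ici 0) r := fun r => by
    refine (((hasDerivAt_id r).const_mul (-C)).exp.smul_const (ind {y})).hasDerivWithinAt
      |>.congr_deriv ?_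
    simp [mul_comm]
  -- `e^{-C r} 𝟙_y` is a subsolution because `R 𝟙_y ≥ -C 𝟙_y`.
  have hsub : ∀ r, 0 ≤ r →
      (-C * Real.exp (-C * r)) • ind {y} ≤ R (Real.exp (-C * r) • ind {y}) := by
    intro r _ z
    rw [hR.map_smul _ (Real.exp_pos _).le]
    by_cases hz : z = y
    · subst hz
      simp only [Pi.smul_apply, ind_of_mem (mem_singleton z), smul_eq_mul, mul_one]
      nlinarith [neg_abs_le (R (ind {z}) z), Real.exp_pos (-C * r)]
    · have hz' : z ∉ ({y} : Set X) := hz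
      have h0 : 0 ≤ R (ind {y}) z := by
        simpa [hR.map_zero] using
          hR.le_of_le_of_eq 0 (ind {y}) z (ind_nonneg _) (ind_of_notMem hz').symm
      simp only [Pi.smul_apply, ind_of_notMem hz', smul_eq_mul, mul_zero]
      positivity
  have h := hR.comparison (fun r _ => hderiv r) (hS.2 (ind {y})) hsub (fun _ _ => le_rfl)
    (by simp [hS.1]) hs y
  simp only [Pi.smul_apply, ind_of_mem (mem_singleton y), smul_eq_mul, mul_one] at h
  exact (Real.exp_pos _).trans_le h

theorem map_pos_of_pos {h : X → ℝ} (hh : 0 ≤ h) {y : X} (hy : 0 < h y) {s : ℝ} (hs : 0 ≤ s) :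
    0 < S s h y :=
  calc 0 < h y * S s (ind {y}) y := mul_pos hy (hS.map_ind_singleton_self_pos hR y hs)
    _ = S s (h y • ind {y}) y := by rw [hS.map_smul hR hy.le _ hs]; rfl
    _ ≤ S s h y := hS.mono hR (smul_ind_singleton_le hh y) hs y

theorem R_ind_posSet_nonpos {g : X → ℝ} (hg : 0 ≤ g) : R (ind (posSet S g)) ≤ 0 := by
  intro y
  by_cases hy : y ∈ posSet S g
  · simpa [hR.map_const] using
      hR.le_of_le_of_eq _ (fun _ => 1) y (ind_le_one _) (ind_of_mem hy)
  · by_contra hpos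
    refine hy fun s hs => ?_
    obtain ⟨r, hr, hrs⟩ := ((hS.eventually_map_pos (ind_nonneg _ y) (not_le.1 hpos)).and
      (Ioo_mem_nhdsGT hs)).exists
    obtain ⟨ε, hε, hεg⟩ := exists_pos_smul_ind_le
      (hS.map_nonneg hR hg (sub_nonneg.2 hrs.2.le))
      fun x (hx : x ∈ posSet S g) => hx (s - r) (sub_pos.2 hrs.2)
    calc 0 < ε * S r (ind (posSet S g)) y := mul_pos hε hr
      _ = S r (ε • ind (posSet S g)) y := by rw [hS.map_smul hR hε.le _ hrs.1.le]; rfl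
      _ ≤ S r (S (s - r) g) y := hS.mono hR hεg hrs.1.le y
      _ = S s g y := by rw [← hS.map_add hR (sub_nonneg.2 hrs.2.le) hrs.1.le, sub_add_cancel]

/-- Whether `S s g` is positive at `y` does not depend on the time `s > 0`. -/
theorem mem_posSet_of_pos {g : X → ℝ} (hg : 0 ≤ g) {s₀ : ℝ} (hs₀ : 0 ≤ s₀) {y : X}
    (h₀ : 0 < S s₀ g y) : y ∈ posSet S g := by
  by_contra hy
  have hgP : g ≤ maxf g • ind (posSet S g) := fun x => by
    by_cases hx : x ∈ posSet S g
    · simpa [ind_of_mem hx] using _root_.le_maxf g x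
    · simp only [Pi.smul_apply, ind_of_notMem hx, smul_zero]
      by_contra hgx
      exact hx fun s hs => hS.map_pos_of_pos hR hg (not_le.1 hgx) hs.le
  have hmax : 0 ≤ maxf g := (hg (Classical.arbitrary X)).trans (_root_.le_maxf g _)
  have hle := hS.mono hR hgP hs₀ y
  have hP := hS.map_le_of_nonpos hR (hS.R_ind_posSet_nonpos hR hg) hs₀ y
  rw [hS.map_smul hR hmax _ hs₀, Pi.smul_apply, smul_eq_mul] at hle
  rw [ind_of_notMem hy] at hP
  nlinarith

theorem map_ind_singleton_pos_trans {a w : X} {s : ℝ} (hs : 0 ≤ s)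
    (ha : ∀ y, 0 < S s (ind {a}) y) (hw : 0 < S s (ind {w}) a) (y : X) :
    0 < S (s + s) (ind {w}) y :=
  calc 0 < S s (ind {w}) a * S s (ind {a}) y := mul_pos hw (ha y)
    _ = S s (S s (ind {w}) a • ind {a}) y := by rw [hS.map_smul hR hw.le _ hs]; rfl
    _ ≤ S s (S s (ind {w})) y :=
      hS.mono hR (smul_ind_singleton_le (hS.map_nonneg hR (ind_nonneg _) hs) a) hs y
    _ = S (s + s) (ind {w}) y := by rw [hS.map_add hR hs hs]

theorem ergodicQ_of_ergodicT {t : ℝ} (ht : 0 ≤ t) (h : ErgodicT (S t)) : ErgodicQ S := by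
  intro f
  obtain ⟨c, hc⟩ := h f
  refine ⟨c, Metric.tendsto_atTop.2 fun ε hε => ?_⟩
  obtain ⟨n, hn⟩ := Metric.tendsto_atTop.1 hc ε hε
  have hclose : ∀ y, |S (n * t) f y - c| < ε := fun y => by
    simpa [hS.iterate hR ht, Real.dist_eq] using (dist_pi_lt_iff hε).1 (hn n le_rfl) y
  refine ⟨n * t, fun s hs => (dist_pi_lt_iff hε).2 fun x => ?_⟩
  have hnt : 0 ≤ (n : ℝ) * t := by positivity
  -- `S s f` is `S (s - n t)` applied to `S (n t) f`, hence lies between its extreme values.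
  rw [← sub_add_cancel s (n * t), add_comm, hS.map_add hR hnt (sub_nonneg.2 hs), Real.dist_eq]
  obtain ⟨x₁, hx₁⟩ := exists_minf_eq (S (n * t) f)
  obtain ⟨x₂, hx₂⟩ := exists_maxf_eq (S (n * t) f)
  have h₁ := hS.minf_le hR (S (n * t) f) (sub_nonneg.2 hs) x
  have h₂ := hS.le_maxf hR (S (n * t) f) (sub_nonneg.2 hs) x
  rw [hx₁] at h₁
  rw [hx₂] at h₂
  have := hclose x₁
  have := hclose x₂
  rw [abs_lt] at *
  constructor <;> linarith

theorem mem_X1A_of_mem {s t : ℝ} (hs : 0 ≤ s) (ht : 0 < t) {x : X} (hx : x ∈ X1A (S s)) :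
    x ∈ X1A (S t) :=
  mem_X1A_iff.2 fun y =>
    hS.conjOp.mem_posSet_of_pos hR.conjOp (ind_nonneg _) hs (mem_X1A_iff.1 hx y) t ht

end IsSol

section Superadditive

variable {X : Type*} {U : (X → ℝ) → (X → ℝ)}

theorem sum_smul_le_of_superadditive {ι : Type*} (hadd : ∀ f g, U f + U g ≤ U (f + g))
    (hsmul : ∀ l : ℝ, 0 ≤ l → ∀ f, U (l • f) = l • U f) (s : Finset ι) {c : ι → ℝ}
    (hc : ∀ i, 0 ≤ c i) (g : ι → X → ℝ) :
    ∑ i ∈ s, c i • U (g i) ≤ U (∑ i ∈ s, c i • g i) := by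
  induction s using Finset.cons_induction with
  | empty => simpa using (hsmul 0 le_rfl 0).ge
  | cons a s ha ih =>
    rw [Finset.sum_cons, Finset.sum_cons, ← hsmul _ (hc a)]
    exact (add_le_add_right ih _).trans (hadd _ _)

end Superadditive

theorem IsLTRO.isMonotoneGenerator {X : Type*} [Fintype X] {Q : (X → ℝ) → (X → ℝ)}
    (hQ : IsLTRO Q) : IsMonotoneGenerator Q where
  map_add_const f c := by
    refine le_antisymm ?_ (by simpa [hQ.1 c] using hQ.2.1 f fun _ => c)
    have h := hQ.2.1 (f + fun _ => c) fun _ => -c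
    rwa [hQ.1 (-c), add_zero, show (f + fun _ => c) + (fun _ => -c) = f by ext; simp] at h
  map_smul := hQ.2.2.1
  le_of_le_of_eq f g x hfg hx := by
    -- `Q h x ≥ ∑ z, h z * Q 𝟙_z x ≥ 0` when `h ≥ 0` vanishes at `x`.
    have hsum := sum_smul_le_of_superadditive hQ.2.1 hQ.2.2.1 Finset.univ
      (fun z => sub_nonneg.2 (hfg z)) fun z => ind {z}
    rw [sum_smul_ind_singleton] at hsum
    have hnonneg : 0 ≤ Q (g - f) x := by
      have hx' := hsum x
      simp only [Finset.sum_apply, Pi.smul_apply, smul_eq_mul] at hx'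
      refine le_trans (Finset.sum_nonneg fun z _ => ?_) hx'
      by_cases hz : z = x
      · simp [hz, hx]
      · exact mul_nonneg (sub_nonneg.2 (hfg z)) (hQ.2.2.2 x z (Ne.symm hz))
    have := hQ.2.1 f (g - f) x
    simp only [Pi.add_apply, add_sub_cancel] at this
    linarith

namespace IsSol

variable {X : Type*} [Fintype X] [Nonempty X] {Q : (X → ℝ) → (X → ℝ)}
  {T : ℝ → (X → ℝ) → (X → ℝ)}

theorem superadditive (hT : IsSol Q T) (hQ : IsLTRO Q) (f g : X → ℝ) {s : ℝ} (hs : 0 ≤ s) :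
    T s f + T s g ≤ T s (f + g) :=
  hQ.isMonotoneGenerator.comparison (fun r hr => (hT.2 f r hr).add (hT.2 g r hr))
    (hT.2 (f + g)) (fun r _ => hQ.2.1 _ _) (fun _ _ => le_rfl) (by simp [hT.1]) hs

theorem isLTO (hT : IsSol Q T) (hQ : IsLTRO Q) {s : ℝ} (hs : 0 ≤ s) : IsLTO (T s) :=
  ⟨fun f => hT.minf_le hQ.isMonotoneGenerator f hs, fun f g => hT.superadditive hQ f g hs,
    fun _ hl f => hT.map_smul hQ.isMonotoneGenerator hl f hs⟩

end IsSol

namespace IsLTO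

variable {X : Type*} [Fintype X] [Nonempty X] {T : (X → ℝ) → (X → ℝ)} (hT : IsLTO T)
include hT

theorem map_const (c : ℝ) : T (fun _ => c) = fun _ => c := by
  have h0 : T 0 = 0 := by simpa using hT.2.2 0 le_rfl 0
  refine le_antisymm (fun x => ?_) fun x => by simpa [minf] using hT.1 (fun _ => c) x
  have h := hT.2.1 (fun _ => c) (fun _ => -c) x
  have hc := hT.1 (fun _ => -c) x
  simp only [minf, Finset.inf'_const] at hc
  rw [show (fun _ : X => c) + (fun _ => -c) = 0 by ext; simp, h0] at h
  simp only [Pi.add_apply, Pi.zero_apply] at h ⊢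
  linarith

theorem map_add_const (f : X → ℝ) (c : ℝ) : T (f + fun _ => c) = T f + fun _ => c := by
  refine le_antisymm (fun x => ?_) fun x => by simpa [hT.map_const] using hT.2.1 f (fun _ => c) x
  have h := hT.2.1 (f + fun _ => c) (fun _ => -c) x
  rw [hT.map_const, show (f + fun _ => c) + (fun _ => -c) = f by ext; simp] at h
  simp only [Pi.add_apply] at h ⊢
  linarith

theorem mono {f g : X → ℝ} (hfg : f ≤ g) : T f ≤ T g := fun x => by
  have h := hT.2.1 f (g - f) x
  have hmin := (le_minf fun y => sub_nonneg.2 (hfg y)).trans (hT.1 (g - f) x)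
  simp only [Pi.add_apply, add_sub_cancel] at h
  linarith

theorem le_maxf (f : X → ℝ) (x : X) : T f x ≤ maxf f := by
  simpa [hT.map_const] using hT.mono (fun y => _root_.le_maxf f y) x

theorem one_le_sum_conjOp_ind (y : X) : 1 ≤ ∑ x, conjOp T (ind {x}) y := by
  have h := sum_smul_le_of_superadditive hT.2.1 hT.2.2 Finset.univ (c := fun _ => 1)
    (fun _ => zero_le_one) fun x => -ind {x}
  simp only [one_smul, Finset.sum_neg_distrib] at h
  rw [show ∑ x : X, ind {x} = fun _ => 1 by
      simpa using sum_smul_ind_singleton (fun _ : X => (1 : ℝ)),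
    show -(fun _ : X => (1 : ℝ)) = fun _ => -1 from rfl, hT.map_const] at h
  have hy := h y
  simp only [Finset.sum_apply] at hy
  simp only [conjOp, Pi.neg_apply, Finset.sum_neg_distrib]
  linarith

theorem apply_le_maxf_sub (f : X → ℝ) (a x : X) :
    T f x ≤ maxf f - (maxf f - f a) * conjOp T (ind {a}) x := by
  have hle : f ≤ (maxf f - f a) • (-ind {a}) + fun _ => maxf f := fun y => by
    by_cases hy : y = a
    · subst hy; simp [ind_of_mem (Set.mem_singleton y)]
    · simpa [ind_of_notMem (show y ∉ ({a} : Set X) from hy)] using _root_.le_maxf f y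
  have h := hT.mono hle x
  rw [hT.map_add_const, hT.2.2 _ (sub_nonneg.2 (_root_.le_maxf f a))] at h
  simp only [Pi.add_apply, Pi.smul_apply, smul_eq_mul] at h
  simp only [conjOp, Pi.neg_apply]
  linarith

theorem minf_add_mul_le_apply (f : X → ℝ) {A : Set X} {c : ℝ} (hc : minf f ≤ c)
    (hA : ∀ b ∈ A, c ≤ f b) (x : X) : minf f + (c - minf f) * T (ind A) x ≤ T f x := by
  have hle : (c - minf f) • ind A + (fun _ => minf f) ≤ f := fun y => by
    by_cases hy : y ∈ A
    · simpa [ind_of_mem hy] using hA y hy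
    · simpa [ind_of_notMem hy] using minf_le f y
  have h := hT.mono hle x
  rw [hT.map_add_const, hT.2.2 _ (sub_nonneg.2 hc)] at h
  simp only [Pi.add_apply, Pi.smul_apply, smul_eq_mul] at h
  linarith

/-- The maximum is pulled down through a state of `𝒳_1A` where `f` is smallest, and the
minimum is pushed up through `T 𝟙_{𝒳_1A}`. -/
theorem exists_oscillation_contraction (hpos : 0 < minf (T (ind (X1A T)))) :
    ∃ ρ : ℝ, 0 ≤ ρ ∧ ρ < 1 ∧ ∀ f, maxf (T f) - minf (T f) ≤ ρ * (maxf f - minf f) := by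
  have hA : (X1A T).Nonempty := by
    by_contra hA
    have h0 : T 0 = 0 := by simpa using hT.2.2 0 le_rfl 0
    rw [Set.not_nonempty_iff_eq_empty.1 hA, show ind (∅ : Set X) = 0 by ext; simp [ind], h0]
      at hpos
    simp [minf] at hpos
  obtain ⟨δ, hδ, hδA⟩ := exists_pos_forall_le (P := X1A T)
    (w := fun a => minf (conjOp T (ind {a}))) fun a ha => ha
  set ε := minf (T (ind (X1A T)))
  set κ := min (min δ ε) 1
  have hκ : 0 < κ := lt_min (lt_min hδ hpos) one_pos
  have hκδ : κ ≤ δ := (min_le_left _ _).trans (min_le_left _ _)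
  have hκε : κ ≤ ε := (min_le_left _ _).trans (min_le_right _ _)
  refine ⟨1 - κ, by linarith [min_le_right (min δ ε) 1], by linarith, fun f => ?_⟩
  obtain ⟨a, ha, hmin⟩ := (X1A T).exists_min_image f (X1A T).toFinite hA
  obtain ⟨x₁, hx₁⟩ := exists_minf_eq (T f)
  obtain ⟨x₂, hx₂⟩ := exists_maxf_eq (T f)
  have hup := hT.apply_le_maxf_sub f a x₂
  have hlow := hT.minf_add_mul_le_apply f (minf_le f a) hmin x₁
  have hδa : δ ≤ conjOp T (ind {a}) x₂ := (hδA a ha).trans (minf_le _ x₂)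
  have hεx : ε ≤ T (ind (X1A T)) x₁ := minf_le _ x₁
  rw [hx₁, hx₂]
  nlinarith [sub_nonneg.2 (_root_.le_maxf f a), sub_nonneg.2 (minf_le f a)]

theorem ergodicT_of_minf_pos (hpos : 0 < minf (T (ind (X1A T)))) : ErgodicT T := by
  obtain ⟨ρ, hρ0, hρ1, hρ⟩ := hT.exists_oscillation_contraction hpos
  intro f
  have hmono : Monotone fun n => minf (T^[n] f) := monotone_nat_of_le_succ fun n => by
    rw [Function.iterate_succ_apply']
    exact le_minf (hT.1 _)
  have hmax : ∀ n, maxf (T^[n] f) ≤ maxf f := fun n => by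
    induction n with
    | zero => rfl
    | succ n ih =>
      rw [Function.iterate_succ_apply']
      exact (maxf_le (hT.le_maxf _)).trans ih
  have hosc : ∀ n, maxf (T^[n] f) - minf (T^[n] f) ≤ ρ ^ n * (maxf f - minf f) := fun n => by
    induction n with
    | zero => simp
    | succ n ih =>
      rw [Function.iterate_succ_apply', pow_succ]
      nlinarith [hρ (T^[n] f)]
  have hmin := tendsto_atTop_ciSup hmono ⟨maxf f, by
    rintro _ ⟨n, rfl⟩
    exact (minf_le_maxf _).trans (hmax n)⟩
  have hosc0 : Tendsto (fun n => maxf (T^[n] f) - minf (T^[n] f)) atTop (𝓝 0) := by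
    refine squeeze_zero (fun n => sub_nonneg.2 (minf_le_maxf _)) hosc ?_
    simpa using (tendsto_pow_atTop_nhds_zero_of_lt_one hρ0 hρ1).mul_const (maxf f - minf f)
  refine ⟨⨆ n, minf (T^[n] f), tendsto_pi_nhds.2 fun x => ?_⟩
  refine tendsto_of_tendsto_of_tendsto_of_le_of_le hmin (by simpa using hmin.add hosc0)
    (fun n => minf_le _ x) fun n => by simpa using _root_.le_maxf (T^[n] f) x

end IsLTO

section Ergodic

variable {X : Type*} [Fintype X] [Nonempty X] {Q : (X → ℝ) → (X → ℝ)}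
  {T : ℝ → (X → ℝ) → (X → ℝ)} (hQ : IsLTRO Q) (hT : IsSol Q T)
include hQ hT

theorem X1A_nonempty_of_ergodicQ (herg : ErgodicQ T) {t : ℝ} (ht : 0 < t) :
    (X1A (T t)).Nonempty := by
  have hlim : ∀ x, ∃ c : ℝ,
      Tendsto (fun s => conjOp (T s) (ind {x})) atTop (𝓝 fun _ => c) := fun x => by
    obtain ⟨c, hc⟩ := herg (-ind {x})
    exact ⟨-c, hc.neg⟩
  choose c hc using hlim
  obtain ⟨y⟩ := ‹Nonempty X›
  have hsum : 1 ≤ ∑ x, c x :=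
    ge_of_tendsto (tendsto_finsetSum _ fun x _ => tendsto_pi_nhds.1 (hc x) y)
      ((eventually_ge_atTop 0).mono fun s hs => (hT.isLTO hQ hs).one_le_sum_conjOp_ind y)
  obtain ⟨x₀, -, hx₀⟩ := Finset.exists_lt_of_sum_lt (f := fun _ => (0 : ℝ))
    (by simpa using zero_lt_one.trans_le hsum)
  have hev : ∀ᶠ s in atTop, 0 < s ∧ ∀ y, 0 < conjOp (T s) (ind {x₀}) y :=
    (eventually_gt_atTop 0).and <| eventually_all.2 fun y =>
      (tendsto_pi_nhds.1 (hc x₀) y).eventually (lt_mem_nhds hx₀)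
  obtain ⟨s, hs, hpos⟩ := hev.exists
  exact ⟨x₀, hT.mem_X1A_of_mem hQ.isMonotoneGenerator hs.le ht (mem_X1A_iff.2 hpos)⟩

/-- `𝒳_1A` is closed under upper reachability, so the lower probability of staying in it
from one of its states is one. -/
theorem one_le_T_ind_X1A {t s : ℝ} (ht : 0 < t) (hs : 0 < s) {a : X} (ha : a ∈ X1A (T t)) :
    1 ≤ T s (ind (X1A (T t))) a := by
  have hR := hQ.isMonotoneGenerator
  set A := X1A (T t)
  have hout : ∀ w ∉ A, 0 ≤ T s (-ind {w}) a := fun w hw => by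
    by_contra hpos
    have hw' := hT.conjOp.map_ind_singleton_pos_trans hR.conjOp hs.le
      (mem_X1A_iff.1 (hT.mem_X1A_of_mem hR ht.le hs ha))
      (show 0 < conjOp (T s) (ind {w}) a by simp only [conjOp, Pi.neg_apply]; linarith)
    exact hw (hT.mem_X1A_of_mem hR (by positivity) ht (mem_X1A_iff.2 hw'))
  have hsum := sum_smul_le_of_superadditive (hT.superadditive hQ · · hs.le)
    (fun _ hl f => hT.map_smul hR hl f hs.le) Finset.univ (fun w => ind_nonneg Aᶜ w)
    fun w => -ind {w}
  simp only [smul_neg, Finset.sum_neg_distrib, sum_smul_ind_singleton] at hsum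
  have hcompl : ind A = -ind Aᶜ + fun _ => 1 := by
    ext y
    by_cases hy : y ∈ A
    · simp [ind_of_mem hy, ind_of_notMem (Set.notMem_compl_iff.2 hy)]
    · simp [ind_of_notMem hy, ind_of_mem (Set.mem_compl hy)]
  have hna : 0 ≤ T s (-ind Aᶜ) a := by
    refine le_trans (Finset.sum_nonneg fun w _ => ?_) (by simpa using hsum a)
    by_cases hw : w ∈ A
    · simp [ind_of_notMem (Set.notMem_compl_iff.2 hw)]
    · simpa [ind_of_mem (Set.mem_compl hw)] using hout w hw
  rw [hcompl, hT.map_add_const hR _ _ hs.le]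
  simpa using hna

theorem oneStepAbs_of_ergodicQ (herg : ErgodicQ T) {t : ℝ} (ht : 0 < t) : OneStepAbs (T t) := by
  have hR := hQ.isMonotoneGenerator
  obtain ⟨a, ha⟩ := X1A_nonempty_of_ergodicQ hQ hT herg ht
  obtain ⟨c, hc⟩ := herg (ind (X1A (T t)))
  have hc1 : 1 ≤ c := ge_of_tendsto (tendsto_pi_nhds.1 hc a)
    ((eventually_gt_atTop 0).mono fun s hs => one_le_T_ind_X1A hQ hT ht hs ha)
  have hev : ∀ᶠ s in atTop, 0 < s ∧ ∀ x, 0 < T s (ind (X1A (T t))) x :=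
    (eventually_gt_atTop 0).and <| eventually_all.2 fun x =>
      (tendsto_pi_nhds.1 hc x).eventually (lt_mem_nhds (zero_lt_one.trans_le hc1))
  obtain ⟨s, hs, hpos⟩ := hev.exists
  exact ⟨⟨a, ha⟩, fun x _ => hT.mem_posSet_of_pos hR (ind_nonneg _) hs.le (hpos x) t ht⟩

theorem ergodicQ_of_oneStepAbs {t : ℝ} (habs : OneStepAbs (T t)) (ht : 0 < t) : ErgodicQ T := by
  have hR := hQ.isMonotoneGenerator
  refine hT.ergodicQ_of_ergodicT hR ht.le ((hT.isLTO hQ ht.le).ergodicT_of_minf_pos ?_)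
  refine lt_minf_iff.2 fun x => ?_
  by_cases hx : x ∈ X1A (T t)
  · exact hT.map_pos_of_pos hR (ind_nonneg _) (by simp [ind_of_mem hx]) ht.le
  · exact habs.2 x hx

end Ergodic

/-- For any `t > 0`, `Q` is ergodic iff `T_t` is 1-step absorbing. -/
theorem stmt6 {X : Type*} [Fintype X] [Nonempty X]
    (Q : (X → ℝ) → (X → ℝ)) (hQ : IsLTRO Q)
    (T : ℝ → (X → ℝ) → (X → ℝ)) (hT : IsSol Q T)
    (t : ℝ) (ht : 0 < t) :
    ErgodicQ T ↔ OneStepAbs (T t) :=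
  ⟨fun h => oneStepAbs_of_ergodicQ hQ hT h ht, fun h => ergodicQ_of_oneStepAbs hQ hT h ht⟩
end

section
/- Let Q be a lower transition rate operator on a finite nonempty set 𝒳, and let (T_t)_{t≥0} be the associated family of operators determined by the differential equation d/dt T_t f = Q(T_t f) with T_0 f = f. Then T_0 is the identity map, and for every t ≥ 0 the derivative d/dt T_t = Q T_t holds with respect to the operator norm; that is, for every ε > 0 there exists δ > 0 such that for all s ≥ 0 with 0 < |s − t| < δ and all f ∈ 𝓛(𝒳) with ‖f‖ = 1, one has ‖(T_s f − T_t f)/(s − t) − Q(T_t f)‖ < ε. -/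
open Filter Topology

/-! Shifting `f` by the constant `‖f‖` does not change `Q f` and makes it a nonnegative
combination `∑ g y • 𝟙_y`; superadditivity and the nonnegative off-diagonal rates then give
`Q f x ≥ -2 (∑ y, |Q 𝟙_y y|) ‖f‖`, so `Q` is Lipschitz with some constant `K`. By Grönwall,
`‖T r f‖ ≤ e^{K r} ‖f‖`, so near `t` the curve `r ↦ T r f` is `K e^{K (t+1)}`-Lipschitz and its
derivative `Q (T r f)` is `K² e^{K (t+1)}`-Lipschitz. The mean value inequality then bounds the
error of the difference quotient by `K² e^{K (t+1)} |s - t|`, uniformly over `‖f‖ = 1`. -/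

open Set

theorem sum_smul_ind_singleton_s8 {X : Type*} [Fintype X] (g : X → ℝ) :
    ∑ y, g y • ind ({y} : Set X) = g := by
  classical
  simpa [ind, Set.indicator_singleton, ← Pi.single_smul] using Finset.univ_sum_single g

namespace IsLTRO

variable {X : Type*} [Fintype X] {Q : (X → ℝ) → (X → ℝ)}

theorem map_zero (hQ : IsLTRO Q) : Q 0 = 0 :=
  hQ.1 0

theorem map_add_const (hQ : IsLTRO Q) (f : X → ℝ) (c : ℝ) : Q (f + fun _ => c) = Q f := by
  have hcancel : ((f + fun _ => c) + fun _ => -c) = f := by ext; simp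
  refine le_antisymm ?_ ?_
  · have h := hQ.2.1 (f + fun _ => c) (fun _ => -c)
    rwa [hcancel, hQ.1, add_zero] at h
  · simpa [hQ.1 c] using hQ.2.1 f (fun _ => c)

theorem sum_le_map_sum (hQ : IsLTRO Q) {ι : Type*} (s : Finset ι) (g : ι → X → ℝ) :
    ∑ i ∈ s, Q (g i) ≤ Q (∑ i ∈ s, g i) := by
  have h := Finset.le_sum_of_subadditive (fun f => -Q f) (by simp [hQ.map_zero])
    (fun f g => by simpa [neg_add_le_iff_le_add, add_comm] using hQ.2.1 f g) s g
  simpa [Finset.sum_neg_distrib] using h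

theorem mul_apply_ind_self_le (hQ : IsLTRO Q) {g : X → ℝ} (hg : 0 ≤ g) (x : X) :
    g x * Q (ind {x}) x ≤ Q g x :=
  calc g x * Q (ind {x}) x = ∑ y ∈ {x}, g y * Q (ind {y}) x := by simp
    _ ≤ ∑ y, g y * Q (ind {y}) x :=
      Finset.sum_le_sum_of_subset_of_nonneg (Finset.subset_univ _) fun y _ hy =>
        mul_nonneg (hg y) (hQ.2.2.2 x y (Ne.symm (by simpa using hy)))
    _ = (∑ y, Q (g y • ind {y})) x := by simp [hQ.2.2.1 _ (hg _)]
    _ ≤ Q (∑ y, g y • ind {y}) x := hQ.sum_le_map_sum _ _ x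
    _ = Q g x := by rw [sum_smul_ind_singleton_s8]

theorem exists_neg_mul_norm_le_apply (hQ : IsLTRO Q) :
    ∃ M, 0 ≤ M ∧ ∀ f x, -(M * ‖f‖) ≤ Q f x := by
  set m := ∑ y, |Q (ind {y}) y|
  have hm0 : 0 ≤ m := by positivity
  refine ⟨2 * m, by positivity, fun f x => ?_⟩
  have hm : -m ≤ Q (ind {x}) x := by
    have : |Q (ind {x}) x| ≤ m :=
      Finset.single_le_sum (f := fun y => |Q (ind {y}) y|) (fun _ _ => abs_nonneg _)
        (Finset.mem_univ x)
    linarith [neg_abs_le (Q (ind {x}) x)]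
  have hf : ∀ y, |f y| ≤ ‖f‖ := fun y => by simpa using norm_le_pi_norm f y
  set g : X → ℝ := f + fun _ => ‖f‖
  have hg : 0 ≤ g := fun y => by
    simp only [g, Pi.add_apply, Pi.zero_apply]; linarith [neg_abs_le (f y), hf y]
  have hgx : g x ≤ 2 * ‖f‖ := by
    simp only [g, Pi.add_apply]; linarith [le_abs_self (f x), hf x]
  calc -(2 * m * ‖f‖) ≤ g x * Q (ind {x}) x := by
        nlinarith [mul_le_mul_of_nonneg_left hm (hg x), mul_le_mul_of_nonneg_left hgx hm0]
    _ ≤ Q g x := hQ.mul_apply_ind_self_le hg x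
    _ = Q f x := congrFun (hQ.map_add_const f ‖f‖) x

theorem exists_lipschitzWith (hQ : IsLTRO Q) : ∃ K, LipschitzWith K Q := by
  obtain ⟨M, hM0, hM⟩ := hQ.exists_neg_mul_norm_le_apply
  have h : ∀ f g x, Q g x - Q f x ≤ M * ‖f - g‖ := fun f g x => by
    have := hQ.2.1 g (f - g) x
    simp only [add_sub_cancel, Pi.add_apply] at this
    linarith [hM (f - g) x]
  refine ⟨_, LipschitzWith.of_dist_le' (K := M) fun f g => ?_⟩
  rw [dist_eq_norm, dist_eq_norm, pi_norm_le_iff_of_nonneg (by positivity)]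
  intro x
  rw [Real.norm_eq_abs, Pi.sub_apply, abs_sub_le_iff]
  exact ⟨by simpa [norm_sub_rev] using h g f x, h f g x⟩

end IsLTRO

section ODE

open Real
open scoped NNReal

variable {E : Type*} [NormedAddCommGroup E] [NormedSpace ℝ E]

theorem norm_inv_smul_sub_sub_le {x y v : E} {a b C : ℝ} (hab : a ≠ b)
    (h : ‖y - x - (b - a) • v‖ ≤ C * |b - a|) : ‖(b - a)⁻¹ • (y - x) - v‖ ≤ C := by
  have hba : 0 < |b - a| := abs_pos.2 (sub_ne_zero.2 hab.symm)
  have heq : (b - a)⁻¹ • (y - x) - v = (b - a)⁻¹ • (y - x - (b - a) • v) := by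
    rw [smul_sub _ (y - x), smul_smul, inv_mul_cancel₀ (sub_ne_zero.2 hab.symm), one_smul]
  rw [heq, norm_smul, norm_inv, Real.norm_eq_abs, inv_mul_le_iff₀ hba, mul_comm]
  exact h

theorem Convex.norm_image_sub_sub_smul_le {f f' : ℝ → E} {s : Set ℝ} {a b C : ℝ}
    (hf : ∀ r ∈ s, HasDerivWithinAt f (f' r) s r) (bound : ∀ r ∈ s, ‖f' r - f' a‖ ≤ C)
    (hs : Convex ℝ s) (ha : a ∈ s) (hb : b ∈ s) :
    ‖f b - f a - (b - a) • f' a‖ ≤ C * |b - a| := by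
  have hg : ∀ r ∈ s, HasDerivWithinAt (fun r => f r - (r - a) • f' a) (f' r - f' a) s r :=
    fun r hr => by
      have h := (hf r hr).sub (((hasDerivAt_id r).sub_const a).smul_const (f' a)).hasDerivWithinAt
      rwa [one_smul] at h
  have h := hs.norm_image_sub_le_of_norm_hasDerivWithin_le hg bound ha hb
  rw [Real.norm_eq_abs, sub_self, zero_smul, sub_zero, sub_right_comm] at h
  exact h

variable {F : E → E} {K : ℝ≥0} {u : ℝ → E}

theorem norm_le_mul_exp_of_hasDerivWithinAt (hF : LipschitzWith K F) (hF0 : F 0 = 0)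
    (hu : ∀ r, 0 ≤ r → HasDerivWithinAt u (F (u r)) (Ici 0) r) {r : ℝ} (hr : 0 ≤ r) :
    ‖u r‖ ≤ ‖u 0‖ * exp (K * r) := by
  have hcont : ContinuousOn u (Icc 0 r) := fun x hx =>
    (hu x hx.1).continuousWithinAt.mono fun y hy => hy.1
  have hderiv : ∀ x ∈ Ico 0 r, HasDerivWithinAt u (F (u x)) (Ici x) x := fun x hx =>
    (hu x hx.1).mono (Ici_subset_Ici.2 hx.1)
  have hbound : ∀ x ∈ Ico 0 r, ‖F (u x)‖ ≤ K * ‖u x‖ + 0 := fun x _ => by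
    simpa [hF0] using hF.norm_sub_le (u x) 0
  simpa [gronwallBound_ε0] using
    norm_le_gronwallBound_of_norm_deriv_right_le hcont hderiv le_rfl hbound r ⟨hr, le_rfl⟩

theorem norm_slope_sub_le_of_hasDerivWithinAt (hF : LipschitzWith K F) (hF0 : F 0 = 0)
    (hu : ∀ r, 0 ≤ r → HasDerivWithinAt u (F (u r)) (Ici 0) r) {s t : ℝ} (hs : 0 ≤ s)
    (ht : 0 ≤ t) (hst : s ≠ t) :
    ‖(s - t)⁻¹ • (u s - u t) - F (u t)‖ ≤ K * (K * (‖u 0‖ * exp (K * max t s))) * |s - t| := by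
  set B := ‖u 0‖ * exp (K * max t s)
  have hI : uIcc t s ⊆ Ici 0 := fun r hr => le_trans (le_min ht hs) hr.1
  have hderiv : ∀ r ∈ uIcc t s, HasDerivWithinAt u (F (u r)) (uIcc t s) r := fun r hr =>
    (hu r (hI hr)).mono hI
  have hbound : ∀ r ∈ uIcc t s, ‖F (u r)‖ ≤ K * B := fun r hr => by
    calc ‖F (u r)‖ ≤ K * ‖u r‖ := by simpa [hF0] using hF.norm_sub_le (u r) 0
      _ ≤ K * B := by
        gcongr
        refine (norm_le_mul_exp_of_hasDerivWithinAt hF hF0 hu (hI hr)).trans ?_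
        show _ ≤ ‖u 0‖ * exp (K * max t s)
        gcongr
        exact hr.2
  have hclose : ∀ r ∈ uIcc t s, ‖u r - u t‖ ≤ K * B * |s - t| := fun r hr => by
    calc ‖u r - u t‖ ≤ K * B * ‖r - t‖ :=
          (convex_uIcc t s).norm_image_sub_le_of_norm_hasDerivWithin_le hderiv hbound
            left_mem_uIcc hr
      _ ≤ K * B * |s - t| := by
        rw [Real.norm_eq_abs]
        exact mul_le_mul_of_nonneg_left (abs_sub_left_of_mem_uIcc hr) (by positivity)
  refine norm_inv_smul_sub_sub_le hst.symm ?_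
  refine (convex_uIcc t s).norm_image_sub_sub_smul_le hderiv (fun r hr => ?_) left_mem_uIcc
    right_mem_uIcc
  calc ‖F (u r) - F (u t)‖ ≤ K * ‖u r - u t‖ := hF.norm_sub_le _ _
    _ ≤ K * (K * B * |s - t|) := by gcongr; exact hclose r hr
    _ = _ := by ring

end ODE

theorem stmt8_general {X : Type*} [Fintype X]
    (Q : (X → ℝ) → (X → ℝ)) (hQ : IsLTRO Q)
    (T : ℝ → (X → ℝ) → (X → ℝ)) (hT : IsSol Q T) :
    (∀ f : X → ℝ, T 0 f = f) ∧
      ∀ t : ℝ, 0 ≤ t → ∀ ε : ℝ, 0 < ε → ∃ δ : ℝ, 0 < δ ∧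
        ∀ s : ℝ, 0 ≤ s → 0 < |s - t| → |s - t| < δ →
          ∀ f : X → ℝ, ‖f‖ = 1 →
            ‖(s - t)⁻¹ • (T s f - T t f) - Q (T t f)‖ < ε := by
  obtain ⟨K, hK⟩ := hQ.exists_lipschitzWith
  refine ⟨hT.1, fun t ht ε hε => ?_⟩
  set C : ℝ := K * (K * Real.exp (K * (t + 1))) with hCdef
  refine ⟨min 1 (ε / (C + 1)), by positivity, fun s hs hst hstδ f hf => ?_⟩
  have hδ1 : |s - t| < 1 := hstδ.trans_le (min_le_left _ _)
  have hδε : |s - t| < ε / (C + 1) := hstδ.trans_le (min_le_right _ _)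
  have hmax : max t s ≤ t + 1 := max_le (by linarith) (by linarith [le_abs_self (s - t)])
  calc ‖(s - t)⁻¹ • (T s f - T t f) - Q (T t f)‖
      ≤ K * (K * (‖T 0 f‖ * Real.exp (K * max t s))) * |s - t| :=
        norm_slope_sub_le_of_hasDerivWithinAt hK hQ.map_zero (hT.2 f) hs ht
          (sub_ne_zero.1 (abs_pos.1 hst))
    _ ≤ C * (ε / (C + 1)) := by
        rw [hT.1, hf, one_mul, hCdef]
        gcongr
    _ < ε := by
        rw [mul_div_assoc', div_lt_iff₀ (by positivity)]
        nlinarith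

/-- `T_0 = I` and `d/dt T_t = Q T_t` with respect to the operator norm. -/
theorem stmt8 {X : Type*} [Fintype X] [Nonempty X]
    (Q : (X → ℝ) → (X → ℝ)) (hQ : IsLTRO Q)
    (T : ℝ → (X → ℝ) → (X → ℝ)) (hT : IsSol Q T) :
    (∀ f : X → ℝ, T 0 f = f) ∧
      ∀ t : ℝ, 0 ≤ t → ∀ ε : ℝ, 0 < ε → ∃ δ : ℝ, 0 < δ ∧
        ∀ s : ℝ, 0 ≤ s → 0 < |s - t| → |s - t| < δ →
          ∀ f : X → ℝ, ‖f‖ = 1 →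
            ‖(s - t)⁻¹ • (T s f - T t f) - Q (T t f)‖ < ε :=
  stmt8_general Q hQ T hT
end

section
/- Let Q be a lower transition rate operator on a finite nonempty set 𝒳, and let (T_t)_{t≥0} be the associated family of operators determined by the differential equation d/dt T_t f = Q(T_t f) with T_0 f = f. Then for every t ≥ 0, T_t = lim_{n→∞} (I + (t/n) Q)^n in operator norm; that is, for every ε > 0 there exists N ∈ ℕ such that for all n ≥ N and all f ∈ 𝓛(𝒳) with ‖f‖ = 1, one has ‖T_t f − (I + (t/n)Q)^n f‖ < ε, where (I + (t/n)Q)^n denotes the n-fold composition of the map g ↦ g + (t/n) Q g. -/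
open Filter Topology

/-!
A lower transition rate operator is superadditive and positively homogeneous, hence Lipschitz on
the finite-dimensional space `X → ℝ`: it is bounded below on the vectors `±𝟙_y`, hence by
superadditivity on all of `X → ℝ`, and `Q f - Q g ≥ Q (f - g)`. So `s ↦ T_s f` solves a Lipschitz
ODE with `Q 0 = 0`, and `(I + (t/n) Q)ⁿ f` is its explicit Euler scheme with step `h = t/n`.
Grönwall gives `‖T_s f‖ ≤ e^{Ks} ‖f‖`, so `‖Q (T_s f)‖ ≤ K e^{Kt}` on `[0, t]` when `‖f‖ = 1`.
One Euler step then has local error `O(h²)` and amplifies earlier errors by at most `1 + Kh`, so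
the global error is `O(1/n)`, uniformly over the unit sphere.
-/

open NNReal Set

section Superadditive

theorem sum_map_le_map_sum {M Y : Type*} [AddCommMonoid M] {Q : M → Y → ℝ}
    (hadd : ∀ f g, Q f + Q g ≤ Q (f + g)) (h0 : Q 0 = 0) {ι : Type*} (s : Finset ι) (g : ι → M) :
    ∑ i ∈ s, Q (g i) ≤ Q (∑ i ∈ s, g i) := by
  have := Finset.le_sum_of_subadditive (fun f => -Q f) (by simp [h0])
    (fun f g => by simpa [neg_add, add_comm] using hadd f g) s g
  simpa [Finset.sum_neg_distrib] using this

variable {E F : Type*} [AddCommGroup E] [Module ℝ E] [NormedAddCommGroup F] [NormedSpace ℝ F]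

theorem map_zero_of_nonneg_smul {Q : E → F}
    (hsmul : ∀ l : ℝ, 0 ≤ l → ∀ f, Q (l • f) = l • Q f) : Q 0 = 0 := by
  simpa using hsmul 0 le_rfl 0

theorem norm_map_smul_le {Q : E → F} (hsmul : ∀ l : ℝ, 0 ≤ l → ∀ f, Q (l • f) = l • Q f)
    (c : ℝ) (g : E) : ‖Q (c • g)‖ ≤ |c| * (‖Q g‖ + ‖Q (-g)‖) := by
  rcases le_or_gt 0 c with hc | hc
  · rw [hsmul c hc, norm_smul, Real.norm_eq_abs]
    gcongr
    exact le_add_of_nonneg_right (norm_nonneg _)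
  · rw [← neg_smul_neg, hsmul (-c) (by linarith), norm_smul, Real.norm_eq_abs, abs_neg]
    gcongr
    exact le_add_of_nonneg_left (norm_nonneg _)

variable {X Y : Type*} [Fintype X] [Fintype Y] {Q : (X → ℝ) → (Y → ℝ)}

theorem exists_neg_mul_norm_le_map (hadd : ∀ f g, Q f + Q g ≤ Q (f + g))
    (hsmul : ∀ l : ℝ, 0 ≤ l → ∀ f, Q (l • f) = l • Q f) :
    ∃ C : ℝ≥0, ∀ f y, -(C * ‖f‖) ≤ Q f y := by
  classical
  set e : X → X → ℝ := fun x => Pi.single x 1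
  refine ⟨∑ x, (‖Q (e x)‖₊ + ‖Q (-e x)‖₊), fun f y => ?_⟩
  have hterm : ∀ x, -(‖f‖ * (‖Q (e x)‖ + ‖Q (-e x)‖)) ≤ Q (Pi.single x (f x)) y := fun x =>
    calc -(‖f‖ * (‖Q (e x)‖ + ‖Q (-e x)‖)) ≤ -‖Q (f x • e x)‖ :=
          neg_le_neg <| (norm_map_smul_le hsmul _ _).trans <| by
            gcongr
            exact norm_le_pi_norm f x
      _ ≤ -|Q (f x • e x) y| := neg_le_neg (norm_le_pi_norm (Q (f x • e x)) y)
      _ ≤ Q (Pi.single x (f x)) y := by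
          rw [show Pi.single x (f x) = f x • e x by simp [e, ← Pi.single_smul]]
          exact neg_abs_le _
  calc -(↑(∑ x, (‖Q (e x)‖₊ + ‖Q (-e x)‖₊)) * ‖f‖)
      = ∑ x, -(‖f‖ * (‖Q (e x)‖ + ‖Q (-e x)‖)) := by
        push_cast
        rw [Finset.sum_mul, ← Finset.sum_neg_distrib]
        simp [mul_comm]
    _ ≤ ∑ x, Q (Pi.single x (f x)) y := Finset.sum_le_sum fun x _ => hterm x
    _ = (∑ x, Q (Pi.single x (f x))) y := by simp
    _ ≤ Q f y := by
        simpa [Finset.univ_sum_single] using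
          sum_map_le_map_sum hadd (map_zero_of_nonneg_smul hsmul) Finset.univ
            (fun x => Pi.single x (f x)) y

theorem exists_lipschitzWith_of_superadditive (hadd : ∀ f g, Q f + Q g ≤ Q (f + g))
    (hsmul : ∀ l : ℝ, 0 ≤ l → ∀ f, Q (l • f) = l • Q f) : ∃ K, LipschitzWith K Q := by
  obtain ⟨C, hC⟩ := exists_neg_mul_norm_le_map hadd hsmul
  refine ⟨C, LipschitzWith.of_dist_le_mul fun f g => ?_⟩
  rw [dist_eq_norm, dist_eq_norm, pi_norm_le_iff_of_nonneg (by positivity)]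
  intro y
  have hfg : Q (f - g) y + Q g y ≤ Q f y := by simpa using hadd (f - g) g y
  have hgf : Q (g - f) y + Q f y ≤ Q g y := by simpa using hadd (g - f) f y
  have := hC (f - g) y
  have := hC (g - f) y
  rw [norm_sub_rev g f] at this
  rw [Pi.sub_apply, Real.norm_eq_abs, abs_le]
  constructor <;> linarith

end Superadditive

section Euler

variable {E : Type*} [NormedAddCommGroup E] [NormedSpace ℝ E]

def eulerStep (F : E → E) (h : ℝ) (y : E) : E := y + h • F y

theorem norm_eulerStep_sub_le {F : E → E} {K : ℝ≥0} (hF : LipschitzWith K F) {h : ℝ}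
    (hh : 0 ≤ h) (y z : E) : ‖eulerStep F h y - eulerStep F h z‖ ≤ (1 + K * h) * ‖y - z‖ :=
  calc ‖eulerStep F h y - eulerStep F h z‖ = ‖(y - z) + h • (F y - F z)‖ := by
        simp only [eulerStep, smul_sub]; abel_nf
    _ ≤ ‖y - z‖ + h * (K * ‖y - z‖) := by
        refine (norm_add_le _ _).trans (add_le_add_right ?_ _)
        rw [norm_smul, Real.norm_of_nonneg hh]
        exact mul_le_mul_of_nonneg_left (hF.norm_sub_le y z) hh
    _ = (1 + K * h) * ‖y - z‖ := by ring

variable {x v : ℝ → E} {F : E → E} {K : ℝ≥0} {t L : ℝ}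

theorem norm_le_exp_mul_of_hasDerivWithinAt_Ici {C : ℝ} (hF : ∀ y, ‖F y‖ ≤ C * ‖y‖)
    (hx : ∀ s, 0 ≤ s → HasDerivWithinAt x (F (x s)) (Ici 0) s) {s : ℝ} (hs : 0 ≤ s) :
    ‖x s‖ ≤ Real.exp (C * s) * ‖x 0‖ := by
  have hcont : ContinuousOn x (Icc 0 s) := fun u hu =>
    (hx u hu.1).continuousWithinAt.mono Icc_subset_Ici_self
  have := norm_le_gronwallBound_of_norm_deriv_right_le hcont
    (fun u hu => (hx u hu.1).mono (Ici_subset_Ici.mpr hu.1)) le_rfl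
    (fun u _ => (hF _).trans_eq (add_zero _).symm) s ⟨hs, le_rfl⟩
  rwa [gronwallBound_ε0, sub_zero, mul_comm] at this

theorem norm_sub_le_of_hasDerivWithinAt_Ici
    (hx : ∀ s, 0 ≤ s → HasDerivWithinAt x (v s) (Ici 0) s) (hv : ∀ s ∈ Icc 0 t, ‖v s‖ ≤ L)
    {a b : ℝ} (ha : 0 ≤ a) (hab : a ≤ b) (hbt : b ≤ t) : ‖x b - x a‖ ≤ L * (b - a) := by
  have hder : ∀ s ∈ Icc a b, HasDerivWithinAt x (v s) (Icc a b) s := fun s hs =>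
    (hx s (ha.trans hs.1)).mono (Icc_subset_Ici_self.trans (Ici_subset_Ici.mpr ha))
  have := (convex_Icc a b).norm_image_sub_le_of_norm_hasDerivWithin_le hder
    (fun s hs => hv s ⟨ha.trans hs.1, hs.2.trans hbt⟩) (left_mem_Icc.mpr hab)
    (right_mem_Icc.mpr hab)
  rwa [Real.norm_of_nonneg (sub_nonneg.mpr hab)] at this

theorem norm_sub_eulerStep_le (hF : LipschitzWith K F)
    (hx : ∀ s, 0 ≤ s → HasDerivWithinAt x (F (x s)) (Ici 0) s)
    (hL : ∀ s ∈ Icc 0 t, ‖F (x s)‖ ≤ L) {a h : ℝ} (ha : 0 ≤ a) (hh : 0 ≤ h)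
    (hat : a + h ≤ t) :
    ‖x (a + h) - eulerStep F h (x a)‖ ≤ K * L * h ^ 2 := by
  set g : ℝ → E := fun s => x s - (s - a) • F (x a)
  have hder : ∀ s ∈ Icc a (a + h),
      HasDerivWithinAt g (F (x s) - F (x a)) (Icc a (a + h)) s := by
    intro s hs
    have hxs : HasDerivWithinAt x (F (x s)) (Icc a (a + h)) s :=
      (hx s (ha.trans hs.1)).mono (Icc_subset_Ici_self.trans (Ici_subset_Ici.mpr ha))
    convert hxs.sub (((hasDerivWithinAt_id s _).sub_const a).smul_const (F (x a))) using 1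
    · rfl
    · rw [one_smul]
  have hbound : ∀ s ∈ Icc a (a + h), ‖F (x s) - F (x a)‖ ≤ K * (L * h) := by
    intro s hs
    calc ‖F (x s) - F (x a)‖ ≤ K * ‖x s - x a‖ := hF.norm_sub_le _ _
      _ ≤ K * (L * (s - a)) := by
          gcongr
          exact norm_sub_le_of_hasDerivWithinAt_Ici hx hL ha hs.1 (hs.2.trans hat)
      _ ≤ K * (L * h) := by
          have hL0 : 0 ≤ L := (norm_nonneg _).trans (hL a ⟨ha, by linarith⟩)
          gcongr
          linarith [hs.2]
  have := (convex_Icc a (a + h)).norm_image_sub_le_of_norm_hasDerivWithin_le hder hbound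
    (left_mem_Icc.mpr (by linarith)) (right_mem_Icc.mpr (by linarith))
  simp only [g, sub_self, zero_smul, sub_zero, add_sub_cancel_left,
    Real.norm_of_nonneg hh] at this
  calc _ = ‖x (a + h) - h • F (x a) - x a‖ := by simp only [eulerStep]; congr 1; abel
    _ ≤ K * (L * h) * h := this
    _ = K * L * h ^ 2 := by ring

theorem norm_sub_iterate_eulerStep_le (hF : LipschitzWith K F)
    (hx : ∀ s, 0 ≤ s → HasDerivWithinAt x (F (x s)) (Ici 0) s)
    (hL : ∀ s ∈ Icc 0 t, ‖F (x s)‖ ≤ L) {h : ℝ} (hh : 0 ≤ h) :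
    ∀ k : ℕ, k * h ≤ t →
      ‖x (k * h) - (eulerStep F h)^[k] (x 0)‖ ≤ k * (K * L * h ^ 2) * (1 + K * h) ^ k := by
  intro k
  induction k with
  | zero => simp
  | succ k ih =>
    intro hkt
    have hkh : (k : ℝ) * h + h ≤ t := by push_cast at hkt; linarith
    have hq : 1 ≤ 1 + (K : ℝ) * h := le_add_of_nonneg_right (by positivity)
    have ht : 0 ≤ t := (by positivity : 0 ≤ (k : ℝ) * h + h).trans hkh
    have hL0 : 0 ≤ L := (norm_nonneg _).trans (hL 0 ⟨le_rfl, ht⟩)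
    set e := ‖x (k * h) - (eulerStep F h)^[k] (x 0)‖
    calc ‖x ((k + 1 : ℕ) * h) - (eulerStep F h)^[k + 1] (x 0)‖
        ≤ ‖x (k * h + h) - eulerStep F h (x (k * h))‖
          + ‖eulerStep F h (x (k * h)) - eulerStep F h ((eulerStep F h)^[k] (x 0))‖ := by
          rw [Function.iterate_succ_apply', Nat.cast_succ, add_one_mul]
          exact norm_sub_le_norm_sub_add_norm_sub _ _ _
      _ ≤ K * L * h ^ 2 + (1 + K * h) * e :=
          add_le_add (norm_sub_eulerStep_le hF hx hL (by positivity) hh hkh)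
            (norm_eulerStep_sub_le hF hh _ _)
      _ ≤ K * L * h ^ 2 * (1 + K * h) ^ (k + 1)
          + (1 + K * h) * (k * (K * L * h ^ 2) * (1 + K * h) ^ k) :=
          add_le_add (le_mul_of_one_le_right (by positivity) (one_le_pow₀ hq))
            (mul_le_mul_of_nonneg_left (ih (by linarith)) (by positivity))
      _ = (k + 1 : ℕ) * (K * L * h ^ 2) * (1 + K * h) ^ (k + 1) := by push_cast; ring

theorem norm_sub_iterate_eulerStep_div_le (hF : LipschitzWith K F)
    (hx : ∀ s, 0 ≤ s → HasDerivWithinAt x (F (x s)) (Ici 0) s)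
    (hL : ∀ s ∈ Icc 0 t, ‖F (x s)‖ ≤ L) (ht : 0 ≤ t) {n : ℕ} (hn : 0 < n) :
    ‖x t - (eulerStep F (t / n))^[n] (x 0)‖ ≤ K * L * t ^ 2 * Real.exp (K * t) / n := by
  have hn' : (0 : ℝ) < n := Nat.cast_pos.mpr hn
  have hnh : (n : ℝ) * (t / n) = t := mul_div_cancel₀ t hn'.ne'
  have hL0 : 0 ≤ L := (norm_nonneg _).trans (hL 0 ⟨le_rfl, ht⟩)
  have hpow : (1 + K * (t / n)) ^ n ≤ Real.exp (K * t) :=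
    calc (1 + K * (t / n)) ^ n ≤ Real.exp (K * (t / n)) ^ n := by
          gcongr
          rw [add_comm]
          exact Real.add_one_le_exp _
      _ = Real.exp (K * t) := by rw [← Real.exp_nat_mul, mul_left_comm, hnh]
  have := norm_sub_iterate_eulerStep_le hF hx hL (by positivity) n hnh.le
  rw [hnh] at this
  calc _ ≤ n * (K * L * (t / n) ^ 2) * (1 + K * (t / n)) ^ n := this
    _ ≤ n * (K * L * (t / n) ^ 2) * Real.exp (K * t) := by gcongr
    _ = K * L * t ^ 2 * Real.exp (K * t) / n := by field_simp

end Euler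

theorem stmt9_general {X : Type*} [Fintype X]
    (Q : (X → ℝ) → (X → ℝ)) (hQ : IsLTRO Q)
    (T : ℝ → (X → ℝ) → (X → ℝ)) (hT : IsSol Q T) :
    ∀ t : ℝ, 0 ≤ t → ∀ ε : ℝ, 0 < ε → ∃ N : ℕ, ∀ n : ℕ, N ≤ n →
      ∀ f : X → ℝ, ‖f‖ = 1 →
        ‖T t f - (fun g : X → ℝ => g + (t / (n : ℝ)) • Q g)^[n] f‖ < ε := by
  obtain ⟨K, hK⟩ := exists_lipschitzWith_of_superadditive hQ.2.1 hQ.2.2.1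
  have hQle : ∀ g, ‖Q g‖ ≤ K * ‖g‖ := fun g => by
    simpa [map_zero_of_nonneg_smul hQ.2.2.1] using hK.norm_sub_le g 0
  intro t ht ε hε
  obtain ⟨N, hN⟩ := eventually_atTop.1
    (((tendsto_const_div_atTop_nhds_zero_nat
      (K * (K * Real.exp (K * t)) * t ^ 2 * Real.exp (K * t))).eventually
        (gt_mem_nhds hε)).and (eventually_gt_atTop 0))
  refine ⟨N, fun n hn f hf => ?_⟩
  obtain ⟨hεn, hn0⟩ := hN n hn
  have hL : ∀ s ∈ Icc 0 t, ‖Q (T s f)‖ ≤ K * Real.exp (K * t) := fun s hs =>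
    calc ‖Q (T s f)‖ ≤ K * (Real.exp (K * s) * ‖T 0 f‖) :=
          (hQle _).trans <| by
            gcongr
            exact norm_le_exp_mul_of_hasDerivWithinAt_Ici hQle (hT.2 f) hs.1
      _ ≤ K * Real.exp (K * t) := by
          rw [hT.1 f, hf, mul_one]
          gcongr
          exact hs.2
  have := norm_sub_iterate_eulerStep_div_le (x := fun s => T s f) hK (hT.2 f) hL ht hn0
  rw [hT.1 f] at this
  exact this.trans_lt hεn

/-- `T_t = lim_{n→∞} (I + (t/n) Q)ⁿ` in operator norm. -/
theorem stmt9 {X : Type*} [Fintype X] [Nonempty X]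
    (Q : (X → ℝ) → (X → ℝ)) (hQ : IsLTRO Q)
    (T : ℝ → (X → ℝ) → (X → ℝ)) (hT : IsSol Q T) :
    ∀ t : ℝ, 0 ≤ t → ∀ ε : ℝ, 0 < ε → ∃ N : ℕ, ∀ n : ℕ, N ≤ n →
      ∀ f : X → ℝ, ‖f‖ = 1 →
        ‖T t f - (fun g : X → ℝ => g + (t / (n : ℝ)) • Q g)^[n] f‖ < ε :=
  stmt9_general Q hQ T hT
end

section
/- Let Q be a lower transition rate operator on a finite nonempty set 𝒳, let t ≥ 0, and let Γ : [0,t] → 𝓛(𝒳) be continuously differentiable with (d/ds)Γ(s) ≥ Q(Γ(s)) pointwise for all s ∈ [0,t]. Then min Γ(t) ≥ min Γ(0). -/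
open Filter Topology

/-! At a minimiser `x` of `f` a lower transition rate operator satisfies `0 ≤ Q f x`: write
`f - min f = ∑ y, (f y - min f) • 𝟙_y`, use superadditivity and homogeneity, and note that the
diagonal term vanishes while the off-diagonal rates `Q 𝟙_y x` are nonnegative. So at every time `s`
some coordinate attaining `min Γ(s)` has nonnegative derivative, which makes the lower right Dini
derivative of `s ↦ min Γ(s)` nonnegative; a continuous function with this property is
nondecreasing. -/

theorem IsLTRO.sum_smul_ind_le {X : Type*} [Fintype X] [DecidableEq X]
    {Q : (X → ℝ) → (X → ℝ)} (hQ : IsLTRO Q) {g : X → ℝ} (hg : 0 ≤ g) :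
    ∑ y, g y • Q (ind {y}) ≤ Q g := by
  obtain ⟨hconst, hsuper, hhom, -⟩ := hQ
  have hsum := Finset.le_sum_of_subadditive (fun h => -Q h) (neg_nonpos.2 (hconst 0).ge)
    (fun a b => by rw [← neg_add]; exact neg_le_neg (hsuper a b)) Finset.univ
    (fun y => Pi.single y (g y))
  rw [Finset.univ_sum_single, Finset.sum_neg_distrib, neg_le_neg_iff] at hsum
  refine le_of_eq_of_le (Finset.sum_congr rfl fun y _ => ?_) hsum
  rw [← hhom _ (hg y), ind, Set.indicator_singleton, Pi.one_apply, ← Pi.single_smul',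
    smul_eq_mul, mul_one]

theorem IsLTRO.apply_nonneg_of_forall_le {X : Type*} [Fintype X] {Q : (X → ℝ) → (X → ℝ)}
    (hQ : IsLTRO Q) {f : X → ℝ} {x : X} (hx : ∀ y, f x ≤ f y) : 0 ≤ Q f x := by
  classical
  have ⟨hconst, hsuper, _, hoff⟩ := hQ
  set g : X → ℝ := f - fun _ => f x
  have hg : 0 ≤ g := fun y => sub_nonneg.2 (hx y)
  have hQg : Q g ≤ Q f := by
    simpa [g, hconst] using hsuper g (fun _ => f x)
  have hdiag : 0 ≤ (∑ y, g y • Q (ind {y})) x := by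
    rw [Finset.sum_apply]
    refine Finset.sum_nonneg fun y _ => ?_
    rcases eq_or_ne y x with rfl | hyx
    · simp [g]
    · exact mul_nonneg (hg y) (hoff x y hyx.symm)
  exact hdiag.trans ((hQ.sum_smul_ind_le hg x).trans (hQg x))

theorem frequently_lt_slope_inf' {ι : Type*} [Fintype ι] [Nonempty ι] {g : ι → ℝ → ℝ}
    {g' : ι → ℝ} {s r : ℝ} (hg : ∀ i, HasDerivWithinAt (g i) (g' i) (Set.Ioi s) s)
    (hr : ∀ i, g i s = Finset.univ.inf' Finset.univ_nonempty (g · s) → r < g' i) :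
    ∃ᶠ z in 𝓝[>] s, r < slope (fun z => Finset.univ.inf' Finset.univ_nonempty (g · z)) s z := by
  set F := fun z => Finset.univ.inf' Finset.univ_nonempty (g · z)
  have hattained : ∃ᶠ z in 𝓝[>] s, ∃ i, F z = g i z := Frequently.of_forall fun z =>
    let ⟨i, _, hi⟩ := Finset.exists_mem_eq_inf' Finset.univ_nonempty (g · z); ⟨i, hi⟩
  obtain ⟨i, hi⟩ := frequently_exists.1 hattained
  have hFcont : ContinuousWithinAt F (Set.Ioi s) s :=
    ContinuousWithinAt.finset_inf'_apply _ fun j _ => (hg j).continuousWithinAt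
  have hactive : g i s = F s :=
    tendsto_nhds_unique_of_frequently_eq (hg i).continuousWithinAt.tendsto hFcont.tendsto
      (hi.mono fun _ hz => hz.symm)
  have hslope : ∀ᶠ z in 𝓝[>] s, r < slope (g i) s z :=
    ((hasDerivWithinAt_iff_tendsto_slope' (lt_irrefl s)).1 (hg i)).eventually_const_lt
      (hr i hactive)
  refine (hi.and_eventually hslope).mono fun z ⟨hz, hzr⟩ => ?_
  rwa [slope_def_field, hz, ← hactive, ← slope_def_field]

theorem image_ge_of_frequently_lt_slope_right {F : ℝ → ℝ} {a b : ℝ}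
    (hF : ContinuousOn F (Set.Icc a b))
    (hslope : ∀ s ∈ Set.Ico a b, ∀ r < 0, ∃ᶠ z in 𝓝[>] s, r < slope F s z) :
    ∀ ⦃x⦄, x ∈ Set.Icc a b → F a ≤ F x := by
  intro x hx
  have := image_le_of_liminf_slope_right_le_deriv_boundary (f := fun z => -F z)
    (B := fun _ => -F a) (B' := 0) hF.neg le_rfl continuousOn_const
    (fun _ _ => hasDerivWithinAt_const _ _ _)
    (fun s hs r hr => (hslope s hs (-r) (by simpa using hr)).mono fun z hz => by
      rw [slope_neg]; linarith) hx
  linarith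

theorem stmt16_general {X : Type*} [Fintype X] [Nonempty X]
    (Q : (X → ℝ) → (X → ℝ)) (hQ : IsLTRO Q)
    (t : ℝ) (ht : 0 ≤ t) (Γ Γ' : ℝ → X → ℝ)
    (hderiv : ∀ s ∈ Set.Icc 0 t, HasDerivWithinAt Γ (Γ' s) (Set.Icc 0 t) s)
    (hineq : ∀ s ∈ Set.Icc 0 t, Q (Γ s) ≤ Γ' s) :
    minf (Γ 0) ≤ minf (Γ t) := by
  have hΓ : ∀ x, ContinuousOn (fun s => Γ s x) (Set.Icc 0 t) := fun x =>
    (continuous_apply x).comp_continuousOn fun s hs => (hderiv s hs).continuousWithinAt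
  refine image_ge_of_frequently_lt_slope_right (F := fun s => minf (Γ s))
    (ContinuousOn.finset_inf'_apply _ fun x _ => hΓ x) (fun s hs r hr => ?_) ⟨ht, le_rfl⟩
  have hs' : s ∈ Set.Icc 0 t := Set.Ico_subset_Icc_self hs
  refine frequently_lt_slope_inf' (g := fun x s => Γ s x) (g' := fun x => Γ' s x)
    (fun x => ?_) fun x hx => ?_
  · exact (hasDerivWithinAt_pi.1 (hderiv s hs') x).mono_of_mem_nhdsWithin
      (Icc_mem_nhdsGT_of_mem hs)
  · have hmin : ∀ y, Γ s x ≤ Γ s y := fun y => hx ▸ Finset.inf'_le _ (Finset.mem_univ y)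
    exact hr.trans_le ((hQ.apply_nonneg_of_forall_le hmin).trans (hineq s hs' x))

/-- If `Γ : [0,t] → 𝓛(𝒳)` is continuously differentiable and
`(d/ds)Γ(s) ≥ Q(Γ(s))` on `[0,t]`, then `min Γ(t) ≥ min Γ(0)`. -/
theorem stmt16 {X : Type*} [Fintype X] [Nonempty X]
    (Q : (X → ℝ) → (X → ℝ)) (hQ : IsLTRO Q)
    (t : ℝ) (ht : 0 ≤ t) (Γ Γ' : ℝ → X → ℝ)
    (hderiv : ∀ s ∈ Set.Icc 0 t, HasDerivWithinAt Γ (Γ' s) (Set.Icc 0 t) s)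
    (hcont : ContinuousOn Γ' (Set.Icc 0 t))
    (hineq : ∀ s ∈ Set.Icc 0 t, Q (Γ s) ≤ Γ' s) :
    minf (Γ 0) ≤ minf (Γ t) :=
  stmt16_general Q hQ t ht Γ Γ' hderiv hineq
end
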